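/- arXiv:1408.0428 — 2 statements merged into one kernel-verified Lean document; each statement's English description precedes it below -/
import Mathlib

section
/- Every edge of the toroidal embedding of K7 is non-removable: removing any edge from K7 yields a graph which, with the induced embedding, merges two triangular faces into a quadrilateral whose boundary meets some other face improperly or fails the polyhedral map conditions; hence K7 on the torus is diminimal with respect to edge removal. -/
/-- The setoid on a type given by "same cycle of the permutation `p`". -/
def sameCycleSetoid {D : Type*} (p : Equiv.Perm D) : Setoid D :=
  ⟨p.SameCycle, ⟨fun x => Equiv.Perm.SameCycle.refl p x,
    fun h => h.symm, fun h h' => h.trans h'⟩⟩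

/-- The number of cycles (orbits) of a permutation. -/
noncomputable def numCycles {D : Type*} (p : Equiv.Perm D) : ℕ :=
  Nat.card (Quotient (sameCycleSetoid p))

/-- A combinatorial map: a finite set of darts, a vertex-rotation permutation `σ`
(whose cycles are the vertices with their cyclic order of incident darts), and a
fixed-point-free involution `α` pairing the two darts of each edge.
Faces are the cycles of `σ * α`. -/
structure TorusMap where
  D : Type
  [fin : Fintype D]
  σ : Equiv.Perm D
  α : Equiv.Perm D
  α_invol : ∀ d, α (α d) = d
  α_nofix : ∀ d, α d ≠ d

namespace TorusMap

variable (M : TorusMap)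

instance : Fintype M.D := M.fin

/-- The face-tracing permutation. -/
def φ : Equiv.Perm M.D := M.σ * M.α

noncomputable def V : ℕ := numCycles M.σ
noncomputable def E : ℕ := numCycles M.α
noncomputable def F : ℕ := numCycles M.φ

/-- The embedding lies on the torus: Euler characteristic `V - E + F = 0`. -/
def OnTorus : Prop := (M.V : ℤ) - M.E + M.F = 0

/-- Every vertex has degree at least 3. -/
def DegGe3 : Prop := ∀ d, M.σ d ≠ d ∧ M.σ (M.σ d) ≠ d

/-- Every face has at least 3 sides. -/
def FaceGe3 : Prop := ∀ d, M.φ d ≠ d ∧ M.φ (M.φ d) ≠ d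

/-- No loops: the two darts of an edge lie at distinct vertices. -/
def NoLoop : Prop := ∀ d, ¬ M.σ.SameCycle d (M.α d)

/-- No multiple edges: two edges joining the same pair of vertices coincide. -/
def NoMulti : Prop := ∀ d d', M.σ.SameCycle d d' → M.σ.SameCycle (M.α d) (M.α d') →
  (d' = d ∨ d' = M.α d)

/-- The underlying graph is simple. -/
def Simple : Prop := M.NoLoop ∧ M.NoMulti

/-- All faces are triangles. -/
def Triangular : Prop := ∀ d, M.φ (M.φ (M.φ d)) = d ∧ M.φ d ≠ d

/-- The boundary of each face is a simple closed curve (no repeated vertices). -/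
def FaceSimple : Prop := ∀ x y, M.φ.SameCycle x y → M.σ.SameCycle x y → x = y

/-- No face traverses the same edge twice (the two sides of each edge lie on
distinct faces). -/
def FaceNoRepeatEdge : Prop := ∀ x, ¬ M.φ.SameCycle x (M.α x)

/-- The set of darts of the face containing dart `d`. -/
def faceSet (d : M.D) : Set M.D := {x | M.φ.SameCycle d x}

/-- The vertex (a `σ`-cycle) at which a dart is based. -/
def vtxOf (d : M.D) : Quotient (sameCycleSetoid M.σ) := Quotient.mk _ d

/-- The edge (an `α`-orbit) carrying a dart. -/
def edgeOf (d : M.D) : Quotient (sameCycleSetoid M.α) := Quotient.mk _ d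

/-- Vertices common to the faces of darts `d` and `d'`. -/
def sharedVerts (d d' : M.D) : Set (Quotient (sameCycleSetoid M.σ)) :=
  (M.vtxOf '' M.faceSet d) ∩ (M.vtxOf '' M.faceSet d')

/-- Edges common to the faces of darts `d` and `d'`. -/
def sharedEdges (d d' : M.D) : Set (Quotient (sameCycleSetoid M.α)) :=
  (M.edgeOf '' M.faceSet d) ∩ (M.edgeOf '' M.faceSet d')

/-- Two faces meet properly: their intersection is empty, a single vertex, or a
single edge together with its two endpoints. -/
def MeetProperly (d d' : M.D) : Prop :=
  (M.sharedEdges d d' = ∅ ∧ (M.sharedVerts d d').Subsingleton) ∨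
  (∃ e, e ∈ M.faceSet d ∧ M.sharedEdges d d' = {M.edgeOf e} ∧
    M.sharedVerts d d' = {M.vtxOf e, M.vtxOf (M.α e)})

/-- A polyhedral map: simple graph, minimum degree 3, each face bounded by a
simple closed curve, and any two distinct faces meet properly. -/
def Polyhedral : Prop :=
  M.Simple ∧ M.DegGe3 ∧ M.FaceSimple ∧ M.FaceNoRepeatEdge ∧
    ∀ d d', ¬ M.φ.SameCycle d d' → M.MeetProperly d d'

/-- A toroidal polyhedral map (TPM). -/
def IsTPM : Prop := Nonempty M.D ∧ M.OnTorus ∧ M.Polyhedral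

/-- The dual map: vertices and faces are exchanged. -/
def dual : TorusMap := ⟨M.D, M.φ, M.α, M.α_invol, M.α_nofix⟩

end TorusMap

section Skip
variable {D : Type*} [Fintype D] (p : Equiv.Perm D) (S : Set D)

lemma skip_ex (x : {y : D // y ∉ S}) : ∃ n, 0 < n ∧ p^[n] x.1 ∉ S := by
  refine ⟨orderOf p, orderOf_pos p, ?_⟩
  have h : p ^ orderOf p = 1 := pow_orderOf_eq_one p
  have : p^[orderOf p] x.1 = (p ^ orderOf p) x.1 := by
    rw [← Equiv.Perm.iterate_eq_pow]
  rw [this, h]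
  exact x.2

open Classical in
/-- First-return map of the permutation `p` on the complement of `S`. -/
noncomputable def skipFun (x : {y : D // y ∉ S}) : {y : D // y ∉ S} :=
  ⟨p^[Nat.find (skip_ex p S x)] x.1, (Nat.find_spec (skip_ex p S x)).2⟩

open Classical in
lemma skipFun_inj : Function.Injective (skipFun p S) := by
  classical
  have key : ∀ x y : {y : D // y ∉ S},
      Nat.find (skip_ex p S x) ≤ Nat.find (skip_ex p S y) →
      skipFun p S x = skipFun p S y → x = y := by
    intro x y hmn h
    set m := Nat.find (skip_ex p S x) with hm
    set n := Nat.find (skip_ex p S y) with hn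
    have hiter : p^[m] x.1 = p^[n] y.1 := congrArg Subtype.val h
    have hx : x.1 = p^[n - m] y.1 := by
      have : p^[m] x.1 = p^[m] (p^[n - m] y.1) := by
        rw [← Function.iterate_add_apply, Nat.add_sub_cancel' hmn, hiter]
      exact (p.injective.iterate m) this
    rcases Nat.eq_zero_or_pos (n - m) with h0 | hpos
    · ext
      simp [hx, h0]
    · exfalso
      have hlt : n - m < n := by
        have hm0 : 0 < m := (Nat.find_spec (skip_ex p S x)).1
        omega
      have := Nat.find_min (skip_ex p S y) hlt
      exact this ⟨hpos, by rw [← hx]; exact x.2⟩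
  intro x y h
  rcases le_total (Nat.find (skip_ex p S x)) (Nat.find (skip_ex p S y)) with hle | hle
  · exact key x y hle h
  · exact (key y x hle h.symm).symm

/-- The permutation induced by `p` on the complement of `S` by skipping over `S`. -/
noncomputable def skipPerm : Equiv.Perm {y : D // y ∉ S} :=
  Equiv.ofBijective _ ((Finite.injective_iff_bijective).mp (skipFun_inj p S))

end Skip

namespace TorusMap

lemma alpha_mem (M : TorusMap) (d x : M.D) :
    x ∉ ({d, M.α d} : Set M.D) ↔ M.α x ∉ ({d, M.α d} : Set M.D) := by
  simp only [Set.mem_insert_iff, Set.mem_singleton_iff]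
  constructor
  · rintro h h'
    rcases h' with h' | h'
    · exact h (Or.inr (by rw [← h', M.α_invol]))
    · exact h (Or.inl (M.α.injective h'))
  · rintro h h'
    rcases h' with h' | h'
    · exact h (Or.inr (by rw [h']))
    · exact h (Or.inl (by rw [h', M.α_invol]))

/-- Deletion of the edge carried by the dart `d`: both darts of the edge are
removed, and the rotations at its endpoints skip over them. -/
noncomputable def deleteEdge (M : TorusMap) (d : M.D) : TorusMap where
  D := {x : M.D // x ∉ ({d, M.α d} : Set M.D)}
  fin := Fintype.ofFinite _
  σ := skipPerm M.σ _
  α := M.α.subtypePerm (fun x => (M.alpha_mem d x).symm)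
  α_invol := fun x => Subtype.ext (by
    simpa [Equiv.Perm.subtypePerm_apply] using M.α_invol x.1)
  α_nofix := fun x h => M.α_nofix x.1 (congrArg Subtype.val h)

/-- Contraction of the edge carried by the dart `d` (dual to deletion). -/
noncomputable def contractEdge (M : TorusMap) (d : M.D) : TorusMap :=
  (M.dual.deleteEdge d).dual

/-- `x` is a dart at a vertex of degree exactly 2. -/
def Deg2 (M : TorusMap) (x : M.D) : Prop := M.σ x ≠ x ∧ M.σ (M.σ x) = x

/-- `x` is a dart of a 2-sided face. -/
def Face2 (M : TorusMap) (x : M.D) : Prop := M.φ x ≠ x ∧ M.φ (M.φ x) = x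

/-- `CoalesceOf N N'` holds when `N'` is obtained from `N` by repeatedly
coalescing the two edges at a degree-2 vertex (i.e. contracting one of them)
until no degree-2 vertex remains. -/
inductive CoalesceOf : TorusMap → TorusMap → Prop
  | refl (N : TorusMap) (h : ∀ x : N.D, ¬ N.Deg2 x) : CoalesceOf N N
  | step (N N' : TorusMap) (x : N.D) (hx : N.Deg2 x)
      (h : CoalesceOf (N.contractEdge x) N') : CoalesceOf N N'

/-- `SimplifyOf N N'` holds when `N'` is obtained from `N` by repeatedly
replacing the two edges of a 2-sided face by a single edge (i.e. deleting one
of them) until no 2-sided face remains. -/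
inductive SimplifyOf : TorusMap → TorusMap → Prop
  | refl (N : TorusMap) (h : ∀ x : N.D, ¬ N.Face2 x) : SimplifyOf N N
  | step (N N' : TorusMap) (x : N.D) (hx : N.Face2 x)
      (h : SimplifyOf (N.deleteEdge x) N') : SimplifyOf N N'

/-- An edge is removable if removing it (and coalescing the edges at any
resulting degree-2 vertex) again yields a toroidal polyhedral map. -/
def Removable (M : TorusMap) (d : M.D) : Prop :=
  ∃ N, CoalesceOf (M.deleteEdge d) N ∧ N.IsTPM

/-- An edge is shrinkable if contracting it (and replacing any resulting
2-sided face by a single edge) again yields a toroidal polyhedral map. -/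
def Shrinkable (M : TorusMap) (d : M.D) : Prop :=
  ∃ N, SimplifyOf (M.contractEdge d) N ∧ N.IsTPM

/-- A toroidal polyhedral map is diminimal if it has no removable and no
shrinkable edges. -/
def Diminimal (M : TorusMap) : Prop :=
  M.IsTPM ∧ ∀ d : M.D, ¬ M.Removable d ∧ ¬ M.Shrinkable d

end TorusMap

/-- Darts of the complete graph `K7`: ordered pairs of distinct vertices. -/
abbrev K7Dart : Type := {p : Fin 7 × Fin 7 // p.1 ≠ p.2}

/-- The rotation system `a: bcdefg, b: agdfec, c: abegfd, d: acfbge, e: adgcbf,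
f: aebdcg, g: afcedb` with `a = 0, …, g = 6`. -/
def rotList : Fin 7 → List (Fin 7)
  | 0 => [1, 2, 3, 4, 5, 6]
  | 1 => [0, 6, 3, 5, 4, 2]
  | 2 => [0, 1, 4, 6, 5, 3]
  | 3 => [0, 2, 5, 1, 6, 4]
  | 4 => [0, 3, 6, 2, 1, 5]
  | 5 => [0, 4, 1, 3, 2, 6]
  | 6 => [0, 5, 2, 4, 3, 1]

/-- The element following `v` in the cyclic order given by the list `l`. -/
def cycNext (l : List (Fin 7)) (v : Fin 7) : Fin 7 :=
  l.getD ((l.idxOf v + 1) % l.length) v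

/-- The vertex-rotation function: `(u, v) ↦ (u, w)` where `w` follows `v` in
the cyclic order at `u`. -/
def k7rotFun (d : K7Dart) : K7Dart :=
  let t := cycNext (rotList d.1.1) d.1.2
  if h : d.1.1 = t then d else ⟨(d.1.1, t), h⟩

noncomputable def k7rot : Equiv.Perm K7Dart := Equiv.ofBijective k7rotFun (by decide)

/-- The dart-reversal involution `(u, v) ↦ (v, u)`. -/
def k7rev : Equiv.Perm K7Dart where
  toFun d := ⟨(d.1.2, d.1.1), d.2.symm⟩
  invFun d := ⟨(d.1.2, d.1.1), d.2.symm⟩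
  left_inv _ := rfl
  right_inv _ := rfl

/-- The diminimal embedding of `K7` on the torus as a combinatorial map. -/
noncomputable def K : TorusMap :=
  { D := K7Dart, σ := k7rot, α := k7rev, α_invol := fun _ => rfl,
    α_nofix := by decide }

/-!
Deleting an edge `uv` of the triangulation merges its two triangles `uva` and `vub` into the
quadrilateral `uavb`, while every vertex keeps degree at least 5, so nothing is coalesced.
As `K7` is complete, `ab` is an edge; a triangle on it meets the quadrilateral in the two
vertices `a`, `b` and in no edge, so these two faces do not meet properly.
-/

namespace Equiv.Perm

variable {α β : Type*} {p : Equiv.Perm α} {x y : α}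

theorem sameCycle_of_iterate_eq {n : ℕ} (h : p^[n] x = y) : p.SameCycle x y :=
  h ▸ sameCycle_pow_right.2 (.refl _ _)

theorem SameCycle.apply_eq_of_invariant [Finite α] {f : α → β} (hf : ∀ z, f (p z) = f z)
    (h : p.SameCycle x y) : f x = f y := by
  obtain ⟨i, rfl⟩ := h.exists_nat_pow_eq
  clear h
  induction i with
  | zero => rfl
  | succ i ih => rw [pow_succ', mul_apply, hf, ih]

theorem SameCycle.exists_iterate_lt_of_isPeriodicPt [Finite α] {n : ℕ}
    (hx : Function.IsPeriodicPt p n x) (hn : 0 < n) (h : p.SameCycle x y) :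
    ∃ i < n, p^[i] x = y := by
  obtain ⟨i, rfl⟩ := h.exists_nat_pow_eq
  exact ⟨i % n, Nat.mod_lt i hn, hx.iterate_mod_apply i⟩

end Equiv.Perm

section Skip

variable {D : Type*} [Fintype D] {p : Equiv.Perm D} {S : Set D} {x : {y : D // y ∉ S}}

open Classical in
theorem skipPerm_apply_of_notMem (h : p x.1 ∉ S) : (skipPerm p S x).1 = p x.1 := by
  show p^[Nat.find (skip_ex p S x)] x.1 = p x.1
  rw [(Nat.find_eq_iff _).2 ⟨⟨one_pos, h⟩, fun n hn => by omega⟩, Function.iterate_one]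

open Classical in
theorem skipPerm_apply_of_mem (h : p x.1 ∈ S) (h' : p (p x.1) ∉ S) :
    (skipPerm p S x).1 = p (p x.1) := by
  show p^[Nat.find (skip_ex p S x)] x.1 = p (p x.1)
  have hmin : ∀ n < 2, ¬ (0 < n ∧ p^[n] x.1 ∉ S) := fun n hn hn' => by
    obtain rfl : n = 1 := by omega
    exact hn'.2 h
  rw [(Nat.find_eq_iff _).2 ⟨⟨two_pos, h'⟩, hmin⟩]
  rfl

theorem sameCycle_skipPerm (x : {y : D // y ∉ S}) : p.SameCycle x.1 (skipPerm p S x).1 :=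
  Equiv.Perm.sameCycle_of_iterate_eq rfl

end Skip

namespace TorusMap

variable (M : TorusMap)

theorem sameCycle_α {e e' : M.D} (h : M.α.SameCycle e e') : e' = e ∨ e' = M.α e := by
  obtain ⟨i, rfl⟩ := h.exists_nat_pow_eq
  clear h
  induction i with
  | zero => exact Or.inl rfl
  | succ i ih =>
    rw [pow_succ', Equiv.Perm.mul_apply]
    rcases ih with h | h <;> rw [h]
    · exact Or.inr rfl
    · exact Or.inl (M.α_invol e)

theorem sharedEdges_eq_empty {x y : M.D}
    (h : ∀ e ∈ M.faceSet x, ∀ e' ∈ M.faceSet y, e' ≠ e ∧ e' ≠ M.α e) :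
    M.sharedEdges x y = ∅ := by
  refine Set.eq_empty_of_forall_notMem ?_
  rintro _ ⟨⟨e, he, rfl⟩, ⟨e', he', hee'⟩⟩
  have := h e he e' he'
  rcases M.sameCycle_α (Quotient.exact hee'.symm) with h' | h'
  exacts [this.1 h', this.2 h']

theorem not_subsingleton_sharedVerts {x y a₁ b₁ a₂ b₂ : M.D}
    (ha₁ : a₁ ∈ M.faceSet x) (hb₁ : b₁ ∈ M.faceSet y) (ha₂ : a₂ ∈ M.faceSet x)
    (hb₂ : b₂ ∈ M.faceSet y) (h₁ : M.σ.SameCycle a₁ b₁) (h₂ : M.σ.SameCycle a₂ b₂)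
    (h₁₂ : ¬ M.σ.SameCycle a₁ a₂) :
    ¬ (M.sharedVerts x y).Subsingleton := fun hsub =>
  h₁₂ <| Quotient.exact <| hsub
    ⟨⟨a₁, ha₁, rfl⟩, ⟨b₁, hb₁, (Quotient.sound h₁).symm⟩⟩
    ⟨⟨a₂, ha₂, rfl⟩, ⟨b₂, hb₂, (Quotient.sound h₂).symm⟩⟩

theorem not_meetProperly {x y : M.D} (hE : M.sharedEdges x y = ∅)
    (hV : ¬ (M.sharedVerts x y).Subsingleton) : ¬ M.MeetProperly x y := by
  rintro (⟨-, hsub⟩ | ⟨e, -, hEdge, -⟩)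
  · exact hV hsub
  · exact (Set.singleton_ne_empty _) (hEdge.symm.trans hE)

theorem not_polyhedral_of_faces {x y : M.D} {m n : ℕ} (hm : 0 < m) (hn : 0 < n)
    (hx : Function.IsPeriodicPt M.φ m x) (hy : Function.IsPeriodicPt M.φ n y)
    (hxy : ∀ i < m, ∀ j < n, M.φ^[j] y ≠ M.φ^[i] x ∧ M.φ^[j] y ≠ M.α (M.φ^[i] x))
    {a₁ b₁ a₂ b₂ : M.D} (ha₁ : a₁ ∈ M.faceSet x) (hb₁ : b₁ ∈ M.faceSet y)
    (ha₂ : a₂ ∈ M.faceSet x) (hb₂ : b₂ ∈ M.faceSet y) (h₁ : M.σ.SameCycle a₁ b₁)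
    (h₂ : M.σ.SameCycle a₂ b₂) (h₁₂ : ¬ M.σ.SameCycle a₁ a₂) : ¬ M.Polyhedral := by
  have face_x : ∀ e ∈ M.faceSet x, ∃ i < m, M.φ^[i] x = e := fun _ he =>
    Equiv.Perm.SameCycle.exists_iterate_lt_of_isPeriodicPt hx hm he
  have face_y : ∀ e ∈ M.faceSet y, ∃ j < n, M.φ^[j] y = e := fun _ he =>
    Equiv.Perm.SameCycle.exists_iterate_lt_of_isPeriodicPt hy hn he
  have hsep : ¬ M.φ.SameCycle x y := fun h => by
    obtain ⟨i, hi, he⟩ := face_x y h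
    exact (hxy i hi 0 hn).1 he.symm
  have hE : M.sharedEdges x y = ∅ := M.sharedEdges_eq_empty fun e he e' he' => by
    obtain ⟨i, hi, rfl⟩ := face_x e he
    obtain ⟨j, hj, rfl⟩ := face_y e' he'
    exact hxy i hi j hj
  rintro ⟨-, -, -, -, hmeet⟩
  exact M.not_meetProperly hE (M.not_subsingleton_sharedVerts ha₁ hb₁ ha₂ hb₂ h₁ h₂ h₁₂)
    (hmeet x y hsep)

theorem CoalesceOf.eq_of_forall_not_deg2 {N N' : TorusMap} (h : CoalesceOf N N')
    (hN : ∀ x, ¬ N.Deg2 x) : N' = N := by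
  cases h with
  | refl => rfl
  | step _ _ x hx _ => exact absurd hx (hN x)

theorem Removable.isTPM_deleteEdge {M : TorusMap} {d : M.D} (h : M.Removable d)
    (hd : ∀ x, ¬ (M.deleteEdge d).Deg2 x) : (M.deleteEdge d).IsTPM := by
  obtain ⟨N, hN, hTPM⟩ := h
  rwa [hN.eq_of_forall_not_deg2 hd] at hTPM

end TorusMap

instance : DecidableEq K.D := inferInstanceAs (DecidableEq K7Dart)

noncomputable instance (d : K.D) : DecidablePred (· ∈ ({d, K.α d} : Set K.D)) :=
  fun x => inferInstanceAs (Decidable (x = d ∨ x = K.α d))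

noncomputable instance (d : K.D) : DecidableEq (K.deleteEdge d).D :=
  inferInstanceAs (DecidableEq {x : K.D // x ∉ ({d, K.α d} : Set K.D)})

noncomputable instance (d : K.D) : Fintype (K.deleteEdge d).D :=
  inferInstanceAs (Fintype {x : K.D // x ∉ ({d, K.α d} : Set K.D)})

theorem k7rotFun_fst (z : K7Dart) : (k7rotFun z).1.1 = z.1.1 := by
  simp only [k7rotFun]
  split_ifs <;> rfl

theorem K_σ_fst (z : K.D) : (K.σ z).1.1 = z.1.1 :=
  k7rotFun_fst z

theorem K_σ_notMem_of_mem_edge : ∀ d z : K.D, z ∈ ({d, K.α d} : Set K.D) →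
    K.σ z ∉ ({d, K.α d} : Set K.D) := by
  decide

/-- `(K.deleteEdge d).σ` in a form the kernel can evaluate: `skipPerm` is defined through a
classical `Nat.find`, but the rotation of `K` never meets both darts of an edge in a row. -/
noncomputable def deleteEdgeRot (d : K.D) (x : (K.deleteEdge d).D) : (K.deleteEdge d).D :=
  if h : K.σ x.1 ∈ ({d, K.α d} : Set K.D) then ⟨K.σ (K.σ x.1), K_σ_notMem_of_mem_edge d _ h⟩
  else ⟨K.σ x.1, h⟩

theorem K_deleteEdge_σ (d : K.D) : ⇑(K.deleteEdge d).σ = deleteEdgeRot d := by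
  funext x
  by_cases h : K.σ x.1 ∈ ({d, K.α d} : Set K.D)
  · exact (Subtype.ext (skipPerm_apply_of_mem h (K_σ_notMem_of_mem_edge d _ h))).trans
      (dif_pos h).symm
  · exact (Subtype.ext (skipPerm_apply_of_notMem h)).trans (dif_neg h).symm

theorem K_deleteEdge_φ (d : K.D) :
    ⇑(K.deleteEdge d).φ = deleteEdgeRot d ∘ (K.deleteEdge d).α := by
  rw [TorusMap.φ, Equiv.Perm.coe_mul, K_deleteEdge_σ]

theorem K_deleteEdge_σ_fst (d : K.D) (x : (K.deleteEdge d).D) :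
    ((K.deleteEdge d).σ x).1.1.1 = x.1.1.1 :=
  ((sameCycle_skipPerm (p := K.σ) x).apply_eq_of_invariant (f := fun z : K.D => z.1.1)
    K_σ_fst).symm

theorem K_deleteEdge_σ_σ_ne (d : K.D) (x : (K.deleteEdge d).D) :
    (K.deleteEdge d).σ ((K.deleteEdge d).σ x) ≠ x := by
  rw [K_deleteEdge_σ]
  revert d x
  decide

set_option maxRecDepth 10000 in
/-- `x` lies on the quadrilateral that replaces the two triangles at `d`, and `y` on its
diagonal; pinning them down keeps the kernel's search short. -/
theorem K_deleteEdge_defect (d : K.D) :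
    ∃ x y : (K.deleteEdge d).D,
      x.1 = K.φ d ∧ y.1.1 = ((K.φ d).1.2, (K.φ (K.α d)).1.2) ∧
      (K.deleteEdge d).φ^[4] x = x ∧ (K.deleteEdge d).φ^[3] y = y ∧
      (∀ i < 4, ∀ j < 3, (K.deleteEdge d).φ^[j] y ≠ (K.deleteEdge d).φ^[i] x ∧
        (K.deleteEdge d).φ^[j] y ≠ (K.deleteEdge d).α ((K.deleteEdge d).φ^[i] x)) ∧
      (∃ k < 6, (K.deleteEdge d).σ^[k] ((K.deleteEdge d).φ x) = y) ∧
      (∃ k < 6, (K.deleteEdge d).σ^[k] ((K.deleteEdge d).φ^[3] x) = (K.deleteEdge d).φ y) ∧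
      ((K.deleteEdge d).φ x).1.1.1 ≠ ((K.deleteEdge d).φ^[3] x).1.1.1 := by
  rw [K_deleteEdge_φ, K_deleteEdge_σ]
  revert d
  decide

theorem K_deleteEdge_not_polyhedral (d : K.D) : ¬ (K.deleteEdge d).Polyhedral := by
  obtain ⟨x, y, -, -, hx, hy, hxy, ⟨k₁, -, hk₁⟩, ⟨k₂, -, hk₂⟩, hab⟩ := K_deleteEdge_defect d
  exact (K.deleteEdge d).not_polyhedral_of_faces four_pos three_pos hx hy hxy
    (Equiv.Perm.sameCycle_of_iterate_eq (n := 1) rfl) (.refl _ _)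
    (Equiv.Perm.sameCycle_of_iterate_eq rfl) (Equiv.Perm.sameCycle_of_iterate_eq (n := 1) rfl)
    (Equiv.Perm.sameCycle_of_iterate_eq hk₁) (Equiv.Perm.sameCycle_of_iterate_eq hk₂)
    fun h => hab (h.apply_eq_of_invariant (f := fun z : (K.deleteEdge d).D => z.1.1.1)
      (K_deleteEdge_σ_fst d))

/-- **No edge of toroidal K7 is removable**; hence `K7` on the torus is
diminimal with respect to edge removal. -/
theorem K7_no_removable_edge : ∀ d : K.D, ¬ K.Removable d := fun d hd =>
  K_deleteEdge_not_polyhedral d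
    (hd.isTPM_deleteEdge fun x hx => K_deleteEdge_σ_σ_ne d x hx.2).2.2
end

section
/- In a toroidal polyhedral map, if V is the number of vertices then V ≥ 7; dually, the number of faces F satisfies F ≥ 7. -/
open Finset Function

open scoped Classical

namespace Equiv.Perm

variable {D : Type*}

def cyclePair (p : Perm D) (q : D × D) :
    Quotient (sameCycleSetoid p) × Quotient (sameCycleSetoid p) :=
  (⟦q.1⟧, ⟦q.2⟧)

theorem cyclePair_eq_cyclePair {p : Perm D} {a b a' b' : D} :
    p.cyclePair (a, b) = p.cyclePair (a', b') ↔ p.SameCycle a a' ∧ p.SameCycle b b' :=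
  Prod.mk.injEq _ _ _ _ ▸ and_congr Quotient.eq Quotient.eq

variable [Fintype D]

theorem sameCycle_iff_of_involutive {p : Perm D} (hp : Involutive p) {x y : D} :
    p.SameCycle x y ↔ y = x ∨ y = p x := by
  constructor
  · intro h
    obtain ⟨n, rfl⟩ := h.exists_nat_pow_eq
    rw [coe_pow]
    rcases Nat.even_or_odd n with hn | hn
    · exact Or.inl (congrFun (hp.iterate_even hn) x)
    · exact Or.inr (congrFun (hp.iterate_odd hn) x)
  · rintro (rfl | rfl)
    · exact SameCycle.refl p y
    · exact sameCycle_apply_right.mpr (SameCycle.refl p x)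

theorem numCycles_eq_card (p : Perm D) :
    numCycles p = Fintype.card (Quotient (sameCycleSetoid p)) :=
  Nat.card_eq_fintype_card

theorem card_eq_two_mul_numCycles {p : Perm D} (hp : Involutive p) (hfix : ∀ d, p d ≠ d) :
    Fintype.card D = 2 * numCycles p := by
  have hcls : ∀ c : Quotient (sameCycleSetoid p),
      #{x | Quotient.mk (sameCycleSetoid p) x = c} = 2 := by
    refine Quotient.ind fun d => ?_
    have : ({x | Quotient.mk (sameCycleSetoid p) x = ⟦d⟧} : Finset D) = {d, p d} := by
      ext x
      simp only [mem_filter, mem_univ, true_and, mem_insert, mem_singleton, Quotient.eq]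
      exact sameCycle_comm.trans (sameCycle_iff_of_involutive hp)
    rw [this, card_pair (hfix d).symm]
  rw [← card_univ, card_eq_sum_card_fiberwise (f := Quotient.mk (sameCycleSetoid p))
    (t := univ) (fun _ _ => mem_coe.mpr (mem_univ _)), sum_congr rfl fun c _ => hcls c,
    sum_const, card_univ, smul_eq_mul, numCycles_eq_card, mul_comm]

noncomputable def nonSuccPairs (p : Perm D) : Finset (D × D) :=
  {q | p.SameCycle q.1 q.2 ∧ q.1 ≠ q.2 ∧ q.1 ≠ p q.2}

theorem three_mul_le_sub_add (k : ℕ) : 3 * k ≤ k * k - k - k + 6 := by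
  rcases Nat.lt_or_ge k 3 with hk | hk
  · interval_cases k <;> simp
  · obtain ⟨m, rfl⟩ := Nat.exists_eq_add_of_le hk
    have : (3 + m) * (3 + m) = m * m + 6 * m + 9 := by ring
    omega

/-- A cycle of length `k` contributes at least `k (k - 2) ≥ 3 k - 6` pairs. -/
theorem three_mul_card_le_card_nonSuccPairs_add (p : Perm D) :
    3 * Fintype.card D ≤ #(nonSuccPairs p) + 6 * numCycles p := by
  let π : D → Quotient (sameCycleSetoid p) := Quotient.mk _
  let cls (c : Quotient (sameCycleSetoid p)) : Finset D := {x | π x = c}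
  have hcls (c) : #(cls c) * #(cls c) - #(cls c) - #(cls c) ≤
      #{q ∈ nonSuccPairs p | π q.1 = c} := by
    calc #(cls c) * #(cls c) - #(cls c) - #(cls c)
        = #(cls c).offDiag - #((cls c).image fun y => (p y, y)) := by
          rw [offDiag_card, card_image_of_injective _ fun y y' h => (Prod.ext_iff.mp h).2]
      _ ≤ #((cls c).offDiag \ (cls c).image fun y => (p y, y)) := le_card_sdiff _ _
      _ ≤ #{q ∈ nonSuccPairs p | π q.1 = c} := by
          refine card_le_card fun q hq => ?_
          simp only [mem_sdiff, mem_offDiag, mem_image, not_exists, not_and, cls, mem_filter,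
            mem_univ, true_and, nonSuccPairs] at hq ⊢
          obtain ⟨⟨h1, h2, hne⟩, hsucc⟩ := hq
          refine ⟨⟨Quotient.exact (h1.trans h2.symm), hne, fun h => ?_⟩, h1⟩
          exact hsucc q.2 h2 (Prod.ext h.symm rfl)
  calc 3 * Fintype.card D = ∑ c, 3 * #(cls c) := by
        rw [← mul_sum, ← card_univ,
          card_eq_sum_card_fiberwise (f := π) (t := univ) fun _ _ => mem_coe.mpr (mem_univ _)]
    _ ≤ ∑ c, ((#(cls c) * #(cls c) - #(cls c) - #(cls c)) + 6) :=
        sum_le_sum fun c _ => three_mul_le_sub_add _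
    _ ≤ ∑ c, #{q ∈ nonSuccPairs p | π q.1 = c} + 6 * numCycles p := by
        rw [sum_add_distrib, sum_const, card_univ, smul_eq_mul, numCycles_eq_card, mul_comm]
        exact Nat.add_le_add_right (sum_le_sum fun c _ => hcls c) _
    _ = #(nonSuccPairs p) + 6 * numCycles p := by
        rw [← card_eq_sum_card_fiberwise fun _ _ => mem_coe.mpr (mem_univ _)]

variable {σ φ : Perm D}

theorem card_nonSuccPairs_le (hs : ∀ x y, φ.SameCycle x y → σ.SameCycle x y → x = y)
    (hinj : Set.InjOn σ.cyclePair (nonSuccPairs φ)) :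
    #(nonSuccPairs φ) ≤ numCycles σ * numCycles σ - numCycles σ := by
  calc #(nonSuccPairs φ) ≤ #(univ.offDiag : Finset (Quotient (sameCycleSetoid σ) × _)) := by
        refine card_le_card_of_injOn _ (fun q hq => ?_) hinj
        simp only [nonSuccPairs, coe_filter, mem_univ, true_and, Set.mem_ofPred_eq] at hq
        exact mem_offDiag.mpr ⟨mem_univ _, mem_univ _,
          fun h => hq.2.1 (hs _ _ hq.1 (Quotient.eq.mp h))⟩
    _ = numCycles σ * numCycles σ - numCycles σ := by
        rw [offDiag_card, card_univ, numCycles_eq_card]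

theorem injOn_cyclePair (hs : ∀ x y, φ.SameCycle x y → σ.SameCycle x y → x = y)
    (hsep : ∀ ⦃x y x' y'⦄, φ.SameCycle x y → φ.SameCycle x' y' → ¬ φ.SameCycle x x' →
      σ.SameCycle x x' → σ.SameCycle y y' → x ≠ y → x = φ y ∨ x' = φ y') :
    Set.InjOn σ.cyclePair (nonSuccPairs φ) := by
  rintro ⟨x, y⟩ hxy ⟨x', y'⟩ hxy' heq
  simp only [nonSuccPairs, coe_filter, mem_univ, true_and, Set.mem_ofPred_eq] at hxy hxy'
  rw [cyclePair_eq_cyclePair] at heq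
  obtain ⟨hxy, hne, hsucc⟩ := hxy
  obtain ⟨hxy', -, hsucc'⟩ := hxy'
  by_cases hxx' : φ.SameCycle x x'
  · obtain rfl := hs _ _ hxx' heq.1
    obtain rfl := hs _ _ (hxy.symm.trans hxy') heq.2
    rfl
  · exact ((hsep hxy hxy' hxx' heq.1 heq.2 hne).elim hsucc hsucc').elim

end Equiv.Perm

namespace TorusMap

open Equiv.Perm

variable {M : TorusMap}

theorem vtxOf_eq_vtxOf {a b : M.D} : M.vtxOf a = M.vtxOf b ↔ M.σ.SameCycle a b :=
  Quotient.eq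

theorem edgeOf_eq_edgeOf {a b : M.D} : M.edgeOf a = M.edgeOf b ↔ b = a ∨ b = M.α a :=
  Quotient.eq.trans (sameCycle_iff_of_involutive M.α_invol)

theorem φ_apply (d : M.D) : M.φ d = M.σ (M.α d) := rfl

theorem card_D_eq_two_mul_E (M : TorusMap) : Fintype.card M.D = 2 * M.E :=
  card_eq_two_mul_numCycles M.α_invol M.α_nofix

theorem E_eq_V_add_F (h : M.OnTorus) : M.E = M.V + M.F := by
  unfold OnTorus at h
  omega

theorem seven_le_V_of_injOn (hne : Nonempty M.D) (ht : M.OnTorus) (hs : M.FaceSimple)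
    (hinj : Set.InjOn M.σ.cyclePair (nonSuccPairs M.φ)) : 7 ≤ M.V := by
  have hV : 0 < M.V := by
    rw [V, numCycles_eq_card]
    exact Fintype.card_pos_iff.mpr ⟨M.vtxOf hne.some⟩
  have hlow : 3 * Fintype.card M.D ≤ #(nonSuccPairs M.φ) + 6 * M.F :=
    three_mul_card_le_card_nonSuccPairs_add M.φ
  rw [card_D_eq_two_mul_E, E_eq_V_add_F ht] at hlow
  have hup : #(nonSuccPairs M.φ) ≤ M.V * M.V - M.V := card_nonSuccPairs_le hs hinj
  have h7 : 7 * M.V ≤ M.V * M.V := by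
    generalize M.V * M.V = W at *
    omega
  exact Nat.le_of_mul_le_mul_right h7 hV

/-- `a, a'` and `b, b'` lie on two distinct faces, at two common vertices; the edge along which
the faces meet is `{a, b'}` or `{a', b}`. -/
theorem α_eq_or_α_eq (hs : M.FaceSimple)
    (hmeet : ∀ d d', ¬ M.φ.SameCycle d d' → M.MeetProperly d d') {a a' b b' : M.D}
    (hab : ¬ M.φ.SameCycle a b) (ha : M.φ.SameCycle a a') (hb : M.φ.SameCycle b b')
    (hu : M.σ.SameCycle a b) (hw : M.σ.SameCycle a' b') (huw : ¬ M.σ.SameCycle a a') :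
    M.α a = b' ∨ M.α a' = b := by
  have hu' : M.vtxOf a ∈ M.sharedVerts a b :=
    ⟨⟨a, .refl _ _, rfl⟩, ⟨b, .refl _ _, Quot.sound hu.symm⟩⟩
  have hw' : M.vtxOf a' ∈ M.sharedVerts a b := ⟨⟨a', ha, rfl⟩, ⟨b', hb, Quot.sound hw.symm⟩⟩
  rcases hmeet a b hab with ⟨-, hsub⟩ | ⟨e, hae, hedges, hverts⟩
  · exact absurd (vtxOf_eq_vtxOf.mp (hsub hu' hw')) huw
  obtain ⟨z, hbz, hze⟩ := (hedges ▸ Set.mem_singleton (M.edgeOf e) : _ ∈ M.sharedEdges a b).2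
  have hbαe : M.φ.SameCycle b (M.α e) := by
    rcases edgeOf_eq_edgeOf.mp hze.symm with rfl | rfl
    · exact absurd (hae.trans hbz.symm) hab
    · exact hbz
  rw [hverts] at hu' hw'
  rcases hu' with hae' | hae'
  · obtain rfl : a = e := hs _ _ hae (vtxOf_eq_vtxOf.mp hae')
    have ha'e : M.vtxOf a' = M.vtxOf (M.α a) :=
      hw'.resolve_left fun h => huw (vtxOf_eq_vtxOf.mp h.symm)
    exact Or.inl (hs _ _ (hbαe.symm.trans hb) ((vtxOf_eq_vtxOf.mp ha'e).symm.trans hw))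
  · have ha'e : M.vtxOf a' = M.vtxOf e :=
      hw'.resolve_right fun h => huw (vtxOf_eq_vtxOf.mp (hae'.trans h.symm))
    obtain rfl : a' = e := hs _ _ (ha.symm.trans hae) (vtxOf_eq_vtxOf.mp ha'e)
    exact Or.inr (hs _ _ hbαe.symm ((vtxOf_eq_vtxOf.mp hae').symm.trans hu))

theorem injOn_cyclePair_σ (hs : M.FaceSimple)
    (hmeet : ∀ d d', ¬ M.φ.SameCycle d d' → M.MeetProperly d d') :
    Set.InjOn M.σ.cyclePair (nonSuccPairs M.φ) := by
  refine injOn_cyclePair hs fun x y x' y' hxy hxy' hxx' hσx hσy hne => ?_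
  rcases α_eq_or_α_eq hs hmeet hxx' hxy hxy' hσx hσy fun h => hne (hs _ _ hxy h) with h | h
  · refine Or.inr (hs _ _ (sameCycle_apply_left.mpr hxy'.symm) ?_).symm
    rw [φ_apply, ← h, M.α_invol]
    exact sameCycle_apply_left.mpr hσx
  · refine Or.inl (hs _ _ (sameCycle_apply_left.mpr hxy.symm) ?_).symm
    rw [φ_apply, h]
    exact sameCycle_apply_left.mpr hσx.symm

theorem injOn_cyclePair_φ (hs : M.FaceSimple)
    (hmeet : ∀ d d', ¬ M.φ.SameCycle d d' → M.MeetProperly d d') :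
    Set.InjOn M.φ.cyclePair (nonSuccPairs M.σ) := by
  refine injOn_cyclePair (fun x y hσ hφ => hs x y hφ hσ)
    fun x y x' y' hxy hxy' hxx' hφx hφy hne => ?_
  rcases α_eq_or_α_eq hs hmeet (fun h => hne (hs _ _ h hxy)) hφx hφy hxy hxy' hxx' with h | h
  · refine Or.inr (hs _ _ ?_ (sameCycle_apply_left.mpr hxy'.symm)).symm
    rw [← h]
    exact sameCycle_apply_left.mpr hφx
  · refine Or.inl (hs _ _ ?_ (sameCycle_apply_left.mpr hxy.symm)).symm
    rw [← h]
    exact sameCycle_apply_left.mpr hφx.symm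

theorem dual_φ (M : TorusMap) : M.dual.φ = M.σ := by
  ext d
  exact congrArg M.σ (M.α_invol d)

theorem dual_onTorus (ht : M.OnTorus) : M.dual.OnTorus := by
  have hF : M.dual.F = M.V := by rw [F, dual_φ]; rfl
  unfold OnTorus at ht ⊢
  rw [hF, show M.dual.V = M.F from rfl, show M.dual.E = M.E from rfl]
  linarith

theorem dual_faceSimple (hs : M.FaceSimple) : M.dual.FaceSimple := by
  rw [FaceSimple, dual_φ]
  exact fun x y hσ hφ => hs x y hφ hσ

theorem IsTPM.seven_le_V (h : M.IsTPM) : 7 ≤ M.V := by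
  obtain ⟨hne, ht, -, -, hs, -, hmeet⟩ := h
  exact seven_le_V_of_injOn hne ht hs (injOn_cyclePair_σ hs hmeet)

theorem IsTPM.seven_le_F (h : M.IsTPM) : 7 ≤ M.F := by
  obtain ⟨hne, ht, -, -, hs, -, hmeet⟩ := h
  refine seven_le_V_of_injOn (M := M.dual) hne (dual_onTorus ht) (dual_faceSimple hs) ?_
  rw [dual_φ]
  exact injOn_cyclePair_φ hs hmeet

end TorusMap

/-- **Every toroidal polyhedral map has at least 7 vertices and, dually, at
least 7 faces.** -/
theorem TPM_vertices_and_faces_ge_seven (M : TorusMap) (h : M.IsTPM) :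
    7 ≤ M.V ∧ 7 ≤ M.F :=
  ⟨h.seven_le_V, h.seven_le_F⟩
end
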